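/- A set A is anti-complex if and only if for every function f ≤_{wtt} A (f : ℕ → ℕ), C(f(n)) ≤⁺ n. -/

import Mathlib

open scoped Classical
open Filter

/-- The prefix of length `n` of a set (element of Cantor space), as a binary string. -/
def opre (B : ℕ → Bool) (n : ℕ) : List Bool := (List.range n).map B

/-- An order function: computable, nondecreasing and unbounded. -/
def IsOrder (f : ℕ → ℕ) : Prop := Computable f ∧ Monotone f ∧ ∀ m, ∃ n, m ≤ f n

/-- The discrete inverse of a nondecreasing unbounded function:
`discInv f k` is the greatest `n` with `f n ≤ k`. -/
noncomputable def discInv (f : ℕ → ℕ) (k : ℕ) : ℕ := sSup {n | f n ≤ k}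

/-- There is a Turing reduction computing the function `f` from the set oracle `B`
whose use on input `n` is bounded by `u n`: a monotone partial computable
string functional which computes `f n` from the prefix `B↾(u n)`. -/
def RedUse (f : ℕ → ℕ) (B : ℕ → Bool) (u : ℕ → ℕ) : Prop :=
  ∃ F : List Bool → ℕ →. ℕ, Partrec₂ F ∧
    (∀ (σ τ : List Bool) (n y : ℕ), σ <+: τ → y ∈ F σ n → y ∈ F τ n) ∧
    ∀ n, f n ∈ F (opre B (u n)) n

/-- A set, viewed as a `ℕ`-valued function. -/
def natOf (A : ℕ → Bool) : ℕ → ℕ := fun n => cond (A n) 1 0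

/-- Turing reduction of the set `A` to the set `B` with use bounded by `u`. -/
def SRedUse (A B : ℕ → Bool) (u : ℕ → ℕ) : Prop := RedUse (natOf A) B u

/-- Turing reducibility of a function to a set. -/
def TRed (f : ℕ → ℕ) (B : ℕ → Bool) : Prop := ∃ u, RedUse f B u

/-- Weak truth-table reducibility of a function to a set: the use is computably bounded. -/
def WttRed (f : ℕ → ℕ) (B : ℕ → Bool) : Prop := ∃ u, Computable u ∧ RedUse f B u

/-- Weak truth-table reducibility between sets. -/
def SWttRed (A B : ℕ → Bool) : Prop := WttRed (natOf A) B

/-- `A` is reducible to `B` with tiny use: for every order function `h` there is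
a Turing reduction of `A` to `B` with use bounded by `h`. -/
def TtuRed (A B : ℕ → Bool) : Prop := ∀ h, IsOrder h → SRedUse A B h

/-- `A` is uniformly reducible to `B` with tiny use: a single Turing reduction of
`A` to `B` whose use function is dominated by every order function. -/
def UTtuRed (A B : ℕ → Bool) : Prop :=
  ∃ u : ℕ → ℕ, (∀ h, IsOrder h → ∀ᶠ n in atTop, u n ≤ h n) ∧ SRedUse A B u

/-- The effective join of two sets. -/
def join (A B : ℕ → Bool) : ℕ → Bool := fun n => if n % 2 = 0 then A (n / 2) else B (n / 2)

/-- The halting set `K = {e : φ_e(e)↓}`. -/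
noncomputable def Khalt : ℕ → Bool := fun e =>
  decide (((Denumerable.ofNat Nat.Partrec.Code e).eval e).Dom)

/-- `U` is an optimal machine (for plain Kolmogorov complexity on binary strings). -/
def Optimal (U : List Bool →. List Bool) : Prop :=
  Partrec U ∧ ∀ M : List Bool →. List Bool, Partrec M →
    ∃ c, ∀ (p x : List Bool), x ∈ M p → ∃ q : List Bool, q.length ≤ p.length + c ∧ x ∈ U q

/-- Plain Kolmogorov complexity of a string relative to the machine `U`. -/
noncomputable def Cplx (U : List Bool →. List Bool) (x : List Bool) : ℕ :=
  sInf { k | ∃ p : List Bool, p.length = k ∧ x ∈ U p }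

/-- Kolmogorov complexity of a natural number (coded as a binary string). -/
noncomputable def CplxN (U : List Bool →. List Bool) (n : ℕ) : ℕ := Cplx U (Nat.bits n)

/-- `A` is anti-complex: for every order function `f`, `C(A↾f(n)) ≤ n` for almost all `n`. -/
def AntiComplex (U : List Bool →. List Bool) (A : ℕ → Bool) : Prop :=
  ∀ f, IsOrder f → ∀ᶠ n in atTop, Cplx U (opre A (f n)) ≤ n

/-- `g_A(k)` is the least `n` such that `C(A↾m) > k` for all `m ≥ n`. -/
noncomputable def gA (U : List Bool →. List Bool) (A : ℕ → Bool) (k : ℕ) : ℕ :=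
  sInf {n | ∀ m, n ≤ m → k < Cplx U (opre A m)}

/-- Coding of binary strings by natural numbers, ordered by length first. -/
def strToNat (l : List Bool) : ℕ := l.foldl (fun a b => 2 * a + cond b 1 0) 1 - 1

/-- The least `U`-description of the string `x`, as a natural number. -/
noncomputable def leastDesc (U : List Bool →. List Bool) (x : List Bool) : ℕ :=
  sInf {m | ∃ p : List Bool, strToNat p = m ∧ x ∈ U p}

/-- The set `A* = {(A↾g_A(k))* : k ∈ ℕ}` of least descriptions of the segments `A↾g_A(k)`. -/
noncomputable def Astar (U : List Bool →. List Bool) (A : ℕ → Bool) : ℕ → Bool :=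
  fun m => decide (∃ k, m = leastDesc U (opre A (gA U A k)))

/-- A c.e. trace for `f` bounded by `h`: a uniformly c.e. sequence of finite sets
`T n` with `f n ∈ T n` and `|T n| ≤ h n`. -/
def CeTrace (h f : ℕ → ℕ) : Prop :=
  ∃ S : ℕ → ℕ → Prop, REPred (fun p : ℕ × ℕ => S p.1 p.2) ∧
    ∀ n, S n (f n) ∧ { y | S n y }.Finite ∧ Set.ncard { y | S n y } ≤ h n

/-- The wtt-degree of `A` is r.e. traceable. -/
def ReTraceableWtt (A : ℕ → Bool) : Prop :=
  ∃ h, IsOrder h ∧ ∀ f : ℕ → ℕ, WttRed f A → CeTrace h f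

/-- A computable trace for `f` bounded by `h` (finite sets given by canonical indices,
here: by computable lists). -/
def CompTrace (h f : ℕ → ℕ) : Prop :=
  ∃ T : ℕ → List ℕ, Computable T ∧ ∀ n, f n ∈ T n ∧ (T n).length ≤ h n

/-- Truth-table reducibility of a function to a set: a total computable functional
with computably bounded use. -/
def TtRed (f : ℕ → ℕ) (A : ℕ → Bool) : Prop :=
  ∃ u : ℕ → ℕ, Computable u ∧ ∃ F : List Bool → ℕ → ℕ, Computable₂ F ∧
    ∀ n, F (opre A (u n)) n = f n

/-- `A` is Schnorr trivial (via the Franklin–Stephan characterisation: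
its truth-table degree is computably traceable). -/
def SchnorrTrivial (A : ℕ → Bool) : Prop :=
  ∃ h, IsOrder h ∧ ∀ f : ℕ → ℕ, TtRed f A → CompTrace h f

/-- `A` is truth-table reducible to `B` with tiny use: for every order function `h`
there is a total computable functional computing `A` from `B` with use bounded by `h`. -/
def TttuRed (A B : ℕ → Bool) : Prop :=
  ∀ h, IsOrder h → ∃ F : List Bool → ℕ → Bool, Computable₂ F ∧
    ∀ n, F (opre B (h n)) n = A n

/-- `g` dominates every computable function. -/
def Dominant (g : ℕ → ℕ) : Prop :=
  ∀ f : ℕ → ℕ, Computable f → ∀ᶠ n in atTop, f n ≤ g n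

/-- Prefix of a function oracle. -/
def fpre (f : ℕ → ℕ) (n : ℕ) : List ℕ := (List.range n).map f

/-- Reduction of a set `A` to a function oracle `f` with use bounded by `u`. -/
def RedUseFn (A : ℕ → Bool) (f : ℕ → ℕ) (u : ℕ → ℕ) : Prop :=
  ∃ F : List ℕ → ℕ →. ℕ, Partrec₂ F ∧
    (∀ (σ τ : List ℕ) (n y : ℕ), σ <+: τ → y ∈ F σ n → y ∈ F τ n) ∧
    ∀ n, natOf A n ∈ F (fpre f (u n)) n

/-- Uniform reducibility with tiny use to a function oracle. -/
def UTtuRedFn (A : ℕ → Bool) (f : ℕ → ℕ) : Prop :=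
  ∃ u : ℕ → ℕ, (∀ h, IsOrder h → ∀ᶠ n in atTop, u n ≤ h n) ∧ RedUseFn A f u

/-- The graph of `f`, coded as a set via the standard pairing. -/
def graphOf (f : ℕ → ℕ) : ℕ → Bool :=
  fun m => decide (f (Nat.unpair m).1 = (Nat.unpair m).2)

/-- The real number with binary expansion `X`. -/
noncomputable def realOf (X : ℕ → Bool) : ℝ := ∑' n, cond (X n) (((2:ℝ) ^ (n + 1))⁻¹) 0

/-- `X` is a left-c.e. real. -/
def LeftCE (X : ℕ → Bool) : Prop :=
  ∃ q : ℕ → ℚ, Computable q ∧ Monotone q ∧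
    Tendsto (fun n => (q n : ℝ)) atTop (nhds (realOf X))

/-- `X` is Martin-Löf random: it passes every Martin-Löf test (given as a uniformly
c.e. sequence of sets of strings of measure at most `2^{-n}`). -/
def MLRandom (X : ℕ → Bool) : Prop :=
  ∀ W : ℕ → List Bool → Prop,
    REPred (fun p : ℕ × List Bool => W p.1 p.2) →
    (∀ n, ∑' σ : {σ : List Bool // W n σ}, ((2:ℝ) ^ (σ : List Bool).length)⁻¹ ≤ ((2:ℝ) ^ n)⁻¹) →
    ∃ n, ∀ σ, W n σ → opre X σ.length ≠ σ

/-- `A` is a c.e. set. -/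
def CeSet (A : ℕ → Bool) : Prop := REPred (fun n => A n = true)

/-! If `A` is anti-complex and `f ≤_wtt A` with use bounded by a strictly increasing computable
`v`, then `f n` is computed from `A↾v(n)`, whose length also determines `n`; hence
`C(f n) ≤ C(A↾v(n)) + O(1) ≤ n + O(1)` for almost all `n`.
Conversely, for an order `g` the number whose binary digits, least significant first, are
`A↾g(n)` followed by a `1` is wtt-computable from `A`, and its binary expansion gives back
`A↾g(n)`, so
`C(A↾g(n)) ≤ n + O(1)`. Applied to `g(2m)` and `g(2m+1)` this gives `C(A↾g(n)) ≤ n/2 + O(1)`,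
which is at most `n` for large `n`. -/

theorem Primrec.nat_bits : Primrec Nat.bits := by
  have bits_eq_cons {n : ℕ} (hn : n ≠ 0) : n.bits = n.bodd :: n.div2.bits := by
    conv_lhs => rw [← Nat.bit_bodd_div2 n]
    refine Nat.bits_append_bit _ _ fun h => ?_
    rw [← Nat.bit_bodd_div2 n, h] at hn
    cases hb : n.bodd <;> simp_all [Nat.bit]
  have step : Primrec₂ fun (_ : Unit) (l : List (List Bool)) =>
      some (if l.length = 0 then [] else l.length.bodd :: l.getD l.length.div2 []) :=
    (Primrec.option_some.comp <| Primrec.ite (Primrec.eq.comp Primrec.list_length (.const 0))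
      (.const []) (Primrec.list_cons.comp (Primrec.nat_bodd.comp Primrec.list_length)
        ((Primrec.list_getD []).comp .id (Primrec.nat_div2.comp Primrec.list_length)))).comp₂
      Primrec₂.right
  refine (Primrec.nat_strong_rec (fun (_ : Unit) n => n.bits) step fun _ n => ?_).comp
    (.const ()) .id
  rcases eq_or_ne n 0 with rfl | hn
  · simp
  · have hlt : n.div2 < n := by rw [Nat.div2_val]; omega
    simp [hn, hlt, bits_eq_cons hn]

def natOfBits (l : List Bool) : ℕ := l.foldr Nat.bit 0

theorem Primrec.natOfBits : Primrec natOfBits := by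
  have hbit : Primrec₂ Nat.bit :=
    (Primrec.cond Primrec.fst (Primrec.succ.comp (Primrec.nat_mul.comp (.const 2) Primrec.snd))
      (Primrec.nat_mul.comp (.const 2) Primrec.snd)).of_eq fun p => by
        cases p.1 <;> simp [Nat.bit]
  exact (Primrec.list_foldr .id (.const 0) (hbit.comp₂ (Primrec.fst.comp₂ Primrec₂.right)
    (Primrec.snd.comp₂ Primrec₂.right))).of_eq fun _ => rfl

theorem bits_natOfBits_append_true (l : List Bool) :
    (natOfBits (l ++ [true])).bits = l ++ [true] := by
  induction l with
  | nil => exact Nat.one_bits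
  | cons b l ih =>
    have hne : natOfBits (l ++ [true]) ≠ 0 := by
      intro h
      rw [h, Nat.zero_bits] at ih
      simp at ih
    exact (Nat.bits_append_bit _ b fun h => absurd h hne).trans (congrArg _ ih)

@[simp]
theorem opre_length (B : ℕ → Bool) (n : ℕ) : (opre B n).length = n := by simp [opre]

theorem opre_take (B : ℕ → Bool) {m n : ℕ} (h : m ≤ n) : (opre B n).take m = opre B m := by
  simp [opre, ← List.map_take, List.take_range, Nat.min_eq_left h]

theorem opre_prefix (B : ℕ → Bool) {m n : ℕ} (h : m ≤ n) : opre B m <+: opre B n :=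
  opre_take B h ▸ List.take_prefix _ _

theorem RedUse.mono {f : ℕ → ℕ} {B : ℕ → Bool} {u v : ℕ → ℕ} (h : RedUse f B u)
    (huv : ∀ n, u n ≤ v n) : RedUse f B v := by
  obtain ⟨F, hF, hmono, hf⟩ := h
  exact ⟨F, hF, hmono, fun n => hmono _ _ _ _ (opre_prefix B (huv n)) (hf n)⟩

theorem wttRed_comp_opre {G : List Bool → ℕ} (hG : Computable G) {g : ℕ → ℕ}
    (hg : Computable g) (B : ℕ → Bool) : WttRed (fun n => G (opre B (g n))) B := by
  refine ⟨g, hg, fun σ n => bif decide (g n ≤ σ.length) then Part.some (G (σ.take (g n)))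
    else Part.none, ?_, ?_, fun n => by simp [opre_take]⟩
  · exact Partrec.cond (Primrec.nat_le.decide.to_comp.comp (hg.comp Computable.snd)
      (Computable.list_length.comp Computable.fst))
      (hG.comp (Primrec.list_take.to_comp.comp (hg.comp Computable.snd) Computable.fst)).partrec
      Partrec.none
  · rintro σ _ n y ⟨t, rfl⟩ hy
    by_cases hn : g n ≤ σ.length
    · simpa [hn, Nat.le_add_right_of_le hn, List.take_append_of_le_length hn] using hy
    · simp [hn] at hy

theorem Computable.exists_strictMono_ge {u : ℕ → ℕ} (hu : Computable u) :
    ∃ v : ℕ → ℕ, Computable v ∧ StrictMono v ∧ ∀ n, u n ≤ v n := by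
  let v : ℕ → ℕ := fun n => Nat.rec (u 0) (fun k acc => acc + u (k + 1) + 1) n
  refine ⟨v, ?_, strictMono_nat_of_lt_succ fun n => ?_, fun n => ?_⟩
  · exact (Computable.nat_rec .id (.const (u 0)) (Primrec.succ.to_comp.comp
      (Primrec.nat_add.to_comp.comp (Computable.snd.comp Computable.snd)
        (hu.comp (Computable.succ.comp (Computable.fst.comp Computable.snd))))).to₂).of_eq
      fun _ => rfl
  · change v n < v n + u (n + 1) + 1
    omega
  · cases n with
    | zero => exact le_rfl
    | succ k =>
      change u (k + 1) ≤ v k + u (k + 1) + 1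
      omega

theorem exists_forall_le_add_of_eventually_le_add {a : ℕ → ℕ} {c : ℕ}
    (h : ∀ᶠ n in atTop, a n ≤ n + c) : ∃ c', ∀ n, a n ≤ n + c' := by
  obtain ⟨N, hN⟩ := eventually_atTop.1 h
  refine ⟨c + ∑ k ∈ Finset.range N, a k, fun n => ?_⟩
  rcases lt_or_ge n N with hn | hn
  · have := Finset.single_le_sum (fun k _ => Nat.zero_le (a k)) (Finset.mem_range.2 hn)
    omega
  · have := hN n hn
    omega

section Complexity

variable {U : List Bool →. List Bool}

theorem cplx_le_length {x p : List Bool} (h : x ∈ U p) : Cplx U x ≤ p.length :=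
  Nat.sInf_le ⟨p, rfl, h⟩

theorem Optimal.exists_mem_length_eq_cplx (hU : Optimal U) (x : List Bool) :
    ∃ p : List Bool, p.length = Cplx U x ∧ x ∈ U p := by
  obtain ⟨c, hc⟩ := hU.2 _ Partrec.some
  obtain ⟨q, -, hq⟩ := hc x x (Part.mem_some x)
  exact Nat.sInf_mem (s := {k | ∃ p : List Bool, p.length = k ∧ x ∈ U p}) ⟨q.length, q, rfl, hq⟩

theorem Optimal.exists_cplx_le_cplx_add_of_partrec (hU : Optimal U)
    {φ : List Bool →. List Bool} (hφ : Partrec φ) :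
    ∃ c, ∀ x y, y ∈ φ x → Cplx U y ≤ Cplx U x + c := by
  obtain ⟨c, hc⟩ := hU.2 (fun p => (U p).bind φ) (hU.1.bind (hφ.comp Computable.snd))
  refine ⟨c, fun x y hy => ?_⟩
  obtain ⟨p, hp, hx⟩ := hU.exists_mem_length_eq_cplx x
  obtain ⟨q, hq, hy⟩ := hc p y (Part.mem_bind hx hy)
  calc Cplx U y ≤ q.length := cplx_le_length hy
    _ ≤ Cplx U x + c := hp ▸ hq

theorem Optimal.exists_cplxN_le_cplx_opre_add (hU : Optimal U) {f v : ℕ → ℕ} {B : ℕ → Bool}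
    (hv : Computable v) (hv_mono : StrictMono v) (hf : RedUse f B v) :
    ∃ c, ∀ n, CplxN U (f n) ≤ Cplx U (opre B (v n)) + c := by
  obtain ⟨F, hF, -, hfF⟩ := hf
  let φ : List Bool →. List Bool := fun σ =>
    (Nat.rfind fun m => Part.some (decide (v m = σ.length))).bind fun m => (F σ m).map Nat.bits
  have hφ : Partrec φ :=
    (Partrec.rfind (Primrec.eq.decide.to_comp.comp (hv.comp Computable.snd)
      (Computable.list_length.comp Computable.fst)).to₂.partrec₂).bind
      ((hF.comp Computable.fst Computable.snd).map
        (Primrec.nat_bits.to_comp.comp Computable.snd).to₂)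
  obtain ⟨c, hc⟩ := hU.exists_cplx_le_cplx_add_of_partrec hφ
  refine ⟨c, fun n => hc _ _ ?_⟩
  have hn : n ∈ Nat.rfind fun m => Part.some (decide (v m = (opre B (v n)).length)) :=
    Nat.mem_rfind.2 ⟨by simp, fun hm => by simpa using (hv_mono hm).ne⟩
  exact Part.mem_bind hn (Part.mem_map _ (hfF n))

variable {A : ℕ → Bool}

theorem AntiComplex.exists_cplxN_le_add (hU : Optimal U) (hA : AntiComplex U A) {f : ℕ → ℕ}
    (hf : WttRed f A) : ∃ c, ∀ n, CplxN U (f n) ≤ n + c := by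
  obtain ⟨u, hu, hfu⟩ := hf
  obtain ⟨v, hv, hv_mono, huv⟩ := hu.exists_strictMono_ge
  obtain ⟨c, hc⟩ := hU.exists_cplxN_le_cplx_opre_add hv hv_mono (hfu.mono huv)
  have hv_order : IsOrder v := ⟨hv, hv_mono.monotone, fun m => ⟨m, hv_mono.id_le m⟩⟩
  exact exists_forall_le_add_of_eventually_le_add (c := c) <|
    (hA v hv_order).mono fun n hn => by have := hc n; omega

theorem Optimal.exists_cplx_opre_le_add (hU : Optimal U)
    (H : ∀ f : ℕ → ℕ, WttRed f A → ∃ c, ∀ n, CplxN U (f n) ≤ n + c) {g : ℕ → ℕ}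
    (hg : Computable g) : ∃ c, ∀ n, Cplx U (opre A (g n)) ≤ n + c := by
  obtain ⟨c, hc⟩ := H _ (wttRed_comp_opre
    (Primrec.natOfBits.comp (Primrec.list_append.comp .id (.const [true]))).to_comp hg A)
  obtain ⟨d, hd⟩ := hU.exists_cplx_le_cplx_add_of_partrec (φ := fun σ => σ.take (σ.length - 1))
    (Primrec.list_take.comp (Primrec.pred.comp Primrec.list_length) .id).to_comp.partrec
  refine ⟨c + d, fun n => ?_⟩
  have hdecode := hd (opre A (g n) ++ [true]) (opre A (g n)) (by simp)
  have hcode := hc n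
  simp only [CplxN, id, bits_natOfBits_append_true] at hcode
  omega

theorem Optimal.antiComplex_of_forall_wttRed (hU : Optimal U)
    (H : ∀ f : ℕ → ℕ, WttRed f A → ∃ c, ∀ n, CplxN U (f n) ≤ n + c) : AntiComplex U A := by
  intro g hg
  obtain ⟨c₀, hc₀⟩ := hU.exists_cplx_opre_le_add H (g := fun m => g (2 * m))
    (hg.1.comp (Primrec.nat_mul.comp (.const 2) .id).to_comp)
  obtain ⟨c₁, hc₁⟩ := hU.exists_cplx_opre_le_add H (g := fun m => g (2 * m + 1))
    (hg.1.comp (Primrec.succ.comp (Primrec.nat_mul.comp (.const 2) .id)).to_comp)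
  refine eventually_atTop.2 ⟨2 * (c₀ + c₁), fun n hn => ?_⟩
  obtain ⟨m, rfl | rfl⟩ := Nat.even_or_odd' n
  · have := hc₀ m
    omega
  · have := hc₁ m
    omega

end Complexity

theorem stmt9 (U : List Bool →. List Bool) (hU : Optimal U) (A : ℕ → Bool) :
    AntiComplex U A ↔ ∀ f : ℕ → ℕ, WttRed f A → ∃ c, ∀ n, CplxN U (f n) ≤ n + c :=
  ⟨fun hA _ hf => hA.exists_cplxN_le_add hU hf, hU.antiComplex_of_forall_wttRed⟩
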